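/- The function x ↦ log ρ(x) − log |x|, defined on ℝ² ∖ (L ∪ {0}), extends to a function that is harmonic on the open set ℝ² ∖ L* (in particular, the singularity at the origin is removable). -/

import Mathlib

/-- The singular lattice `L = ℤ × {0} ⊆ ℝ²`. -/
def L : Set (ℝ × ℝ) := {p | ∃ n : ℤ, p = ((n : ℝ), 0)}

/-- `L* = L \ {(0,0)}`. -/
def Lstar : Set (ℝ × ℝ) := L \ {(0, 0)}

/-- `ρ(x) = (sin²(πx₁) + sinh²(πx₂))^{1/2}`. -/
noncomputable def rho (x : ℝ × ℝ) : ℝ :=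
  Real.sqrt (Real.sin (Real.pi * x.1) ^ 2 + Real.sinh (Real.pi * x.2) ^ 2)

/-- A real-valued function is harmonic on an open set `U ⊆ ℝ²` if it is `C²` on `U`
and its Laplacian vanishes on `U`. -/
def HarmonicOn (f : ℝ × ℝ → ℝ) (U : Set (ℝ × ℝ)) : Prop :=
  ContDiffOn ℝ 2 f U ∧
  ∀ x ∈ U, fderiv ℝ (fun y => fderiv ℝ f y (1, 0)) x (1, 0) +
    fderiv ℝ (fun y => fderiv ℝ f y (0, 1)) x (0, 1) = 0

/-!
Writing `z = x₁ + i x₂`, one has `ρ(x) = |sin πz|`, so off `L` the function equals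
`log |F(z)|` with `F(z) = sin(πz)/z`. This difference quotient extends to an entire function
(`F(0) = π`) whose only zeros are the nonzero integers, and `log |F|` is harmonic wherever the
holomorphic function `F` does not vanish.
-/

open Complex InnerProductSpace
open scoped Real

section SecondDerivatives

variable {E F G : Type*} [NormedAddCommGroup E] [NormedSpace ℝ E] [NormedAddCommGroup F]
  [NormedSpace ℝ F] [NormedAddCommGroup G] [NormedSpace ℝ G]

lemma fderiv_fderiv_apply_eq_iteratedFDeriv {f : E → F} {z : E} (hf : ContDiffAt ℝ 2 f z)
    (u v : E) : fderiv ℝ (fun w => fderiv ℝ f w v) z u = iteratedFDeriv ℝ 2 f z ![u, v] := by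
  have hdf : DifferentiableAt ℝ (fderiv ℝ f) z :=
    (hf.fderiv_right (m := 1) le_rfl).differentiableAt one_ne_zero
  rw [iteratedFDeriv_two_apply, fderiv_clm_apply hdf (differentiableAt_const v)]
  simp

lemma fderiv_fderiv_comp_continuousLinearEquiv_apply (f : F → G) (e : E ≃L[ℝ] F) (x u v : E) :
    fderiv ℝ (fun y => fderiv ℝ (fun p => f (e p)) y v) x u =
      fderiv ℝ (fun w => fderiv ℝ f w (e v)) (e x) (e u) := by
  have hcomp :
      (fun y => fderiv ℝ (fun p => f (e p)) y v) = fun y => fderiv ℝ f (e y) (e v) := by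
    ext y
    simp [← Function.comp_def f e, e.comp_right_fderiv]
  rw [hcomp, ← Function.comp_def (fun w => fderiv ℝ f w (e v)) e, e.comp_right_fderiv]
  rfl

end SecondDerivatives

lemma harmonicOn_comp_equivRealProd {f : ℂ → ℝ} {U : Set (ℝ × ℝ)}
    (hf : ∀ x ∈ U, HarmonicAt f (equivRealProdCLM.symm x)) :
    HarmonicOn (fun x => f (equivRealProdCLM.symm x)) U := by
  refine ⟨fun x hx =>
    ((hf x hx).1.comp x equivRealProdCLM.symm.contDiff.contDiffAt).contDiffWithinAt,
    fun x hx => ?_⟩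
  have hΔ := (hf x hx).2.eq_of_nhds
  rw [laplacian_eq_iteratedFDeriv_complexPlane] at hΔ
  simp only [fderiv_fderiv_comp_continuousLinearEquiv_apply,
    fderiv_fderiv_apply_eq_iteratedFDeriv (hf x hx).1]
  simpa [equivRealProdCLM_symm_apply] using hΔ

lemma Complex.norm_sin (z : ℂ) : ‖sin z‖ = √(Real.sin z.re ^ 2 + Real.sinh z.im ^ 2) := by
  have hsin : sin z =
      (Real.sin z.re * Real.cosh z.im : ℝ) + (Real.cos z.re * Real.sinh z.im : ℝ) * I := by
    conv_lhs => rw [← re_add_im z, sin_add, sin_mul_I, cos_mul_I]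
    push_cast
    ring
  rw [norm_eq_sqrt_sq_add_sq, hsin]
  congr 1
  simp only [add_re, add_im, ofReal_re, ofReal_im, mul_re, mul_im, I_re, I_im]
  nlinarith [Real.sin_sq_add_cos_sq z.re, Real.cosh_sq z.im]

lemma sin_pi_mul_eq_zero_iff {z : ℂ} : sin (π * z) = 0 ↔ ∃ n : ℤ, z = n := by
  have hπ : (π : ℂ) ≠ 0 := ofReal_ne_zero.mpr Real.pi_ne_zero
  simp only [sin_eq_zero_iff, mul_comm (π : ℂ) z, mul_left_inj' hπ]

/-- `sin (π z) / z`, with the removable singularity at `0` filled in by `dslope`. -/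
noncomputable def sincPi : ℂ → ℂ := dslope (fun z => sin (π * z)) 0

lemma differentiable_sincPi : Differentiable ℂ sincPi := fun z =>
  ((differentiableOn_dslope Filter.univ_mem).2
    (by fun_prop : Differentiable ℂ fun z => sin (π * z)).differentiableOn).differentiableAt
    Filter.univ_mem

lemma sincPi_zero : sincPi 0 = π := by
  have hd : HasDerivAt (fun z => sin (π * z)) (cos (π * 0) * π) 0 :=
    ((hasDerivAt_id (0 : ℂ)).const_mul (π : ℂ)).csin.congr_deriv (by simp)
  rw [sincPi, dslope_same, hd.deriv]
  simp

lemma sincPi_of_ne_zero {z : ℂ} (hz : z ≠ 0) : sincPi z = sin (π * z) / z := by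
  rw [sincPi, dslope_of_ne _ hz, slope_def_field]
  simp

lemma sincPi_eq_zero_iff {z : ℂ} : sincPi z = 0 ↔ ∃ n : ℤ, n ≠ 0 ∧ z = n := by
  rcases eq_or_ne z 0 with rfl | hz
  · simp [sincPi_zero, Real.pi_ne_zero, eq_comm]
  · rw [sincPi_of_ne_zero hz, div_eq_zero_iff, or_iff_left hz, sin_pi_mul_eq_zero_iff]
    exact ⟨fun ⟨n, hn⟩ => ⟨n, by rintro rfl; simp_all, hn⟩,
      fun ⟨n, _, hn⟩ => ⟨n, hn⟩⟩

lemma equivRealProdCLM_symm_eq_intCast_iff {x : ℝ × ℝ} {n : ℤ} :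
    equivRealProdCLM.symm x = n ↔ x = ((n : ℝ), 0) := by
  simp [Complex.ext_iff, Prod.ext_iff]

lemma sincPi_equivRealProdCLM_symm_ne_zero {x : ℝ × ℝ} (hx : x ∉ Lstar) :
    sincPi (equivRealProdCLM.symm x) ≠ 0 := by
  rw [Ne, sincPi_eq_zero_iff]
  rintro ⟨n, hn, hxn⟩
  rw [equivRealProdCLM_symm_eq_intCast_iff] at hxn
  exact hx ⟨⟨n, hxn⟩, by simp [hxn, hn]⟩

lemma log_norm_sincPi_equivRealProdCLM_symm {x : ℝ × ℝ} (hx : x ∉ L) :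
    Real.log ‖sincPi (equivRealProdCLM.symm x)‖ =
      Real.log (rho x) - Real.log √(x.1 ^ 2 + x.2 ^ 2) := by
  set z := equivRealProdCLM.symm x
  have hz : z ≠ 0 := fun h =>
    hx ⟨0, equivRealProdCLM_symm_eq_intCast_iff.mp (by rw [Int.cast_zero]; exact h)⟩
  have hsin : sin (π * z) ≠ 0 := fun h => by
    obtain ⟨n, hn⟩ := sin_pi_mul_eq_zero_iff.mp h
    exact hx ⟨n, equivRealProdCLM_symm_eq_intCast_iff.mp hn⟩
  have hrho : ‖sin (π * z)‖ = rho x := by simp [norm_sin, rho, z]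
  have hnorm : ‖z‖ = √(x.1 ^ 2 + x.2 ^ 2) := by simp [norm_eq_sqrt_sq_add_sq, z]
  rw [sincPi_of_ne_zero hz, norm_div, Real.log_div (norm_ne_zero_iff.mpr hsin)
    (norm_ne_zero_iff.mpr hz), hrho, hnorm]

/-- `log ρ(x) - log |x|`, defined off `L` (note `ℝ² \ (L ∪ {0}) = ℝ² \ L`), extends to a
function harmonic on `ℝ² \ L*`; the singularity at the origin is removable. -/
theorem stmt15 : ∃ g : ℝ × ℝ → ℝ,
    (∀ x : ℝ × ℝ, x ∉ L → g x = Real.log (rho x) - Real.log (Real.sqrt (x.1 ^ 2 + x.2 ^ 2))) ∧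
    HarmonicOn g Lstarᶜ :=
  ⟨fun x => Real.log ‖sincPi (equivRealProdCLM.symm x)‖,
    fun _ hx => log_norm_sincPi_equivRealProdCLM_symm hx,
    harmonicOn_comp_equivRealProd fun _ hx =>
      (differentiable_sincPi.analyticAt _).harmonicAt_log_norm
        (sincPi_equivRealProdCLM_symm_ne_zero hx)⟩
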